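/- arXiv:1405.2834 — 3 statements merged into one kernel-verified Lean document; each statement's English description precedes it below -/
import Mathlib

section
/- A K_{1,3}-saturated graph on n vertices has either n or n-1 edges. -/
/-- The graph obtained from `G` by adding the edge `uv`. -/
def addEdge {V : Type*} (G : SimpleGraph V) (u v : V) : SimpleGraph V :=
  G ⊔ SimpleGraph.fromEdgeSet {s(u, v)}

/-!
Adding a non-edge `uv` to a `K_{1,3}`-saturated graph can only raise the degrees of `u` and `v`,
so one of them already has degree `2`. Hence the vertices of degree less than `2` form a clique,
and a clique `S` of such vertices has total deficiency `∑ (2 - deg v) ≤ |S| (3 - |S|) ≤ 2`.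
Since this deficiency is `2n - 2|E|`, the graph has `n` or `n - 1` edges.
-/

open Finset

namespace SimpleGraph

variable {V : Type*}

lemma addEdge_comm (G : SimpleGraph V) (u v : V) : addEdge G u v = addEdge G v u := by
  rw [addEdge, addEdge, Sym2.eq_swap]

lemma neighborSet_addEdge_subset_insert (G : SimpleGraph V) (u v : V) :
    (addEdge G u v).neighborSet u ⊆ insert v (G.neighborSet u) := by
  intro x hx
  simp only [addEdge, mem_neighborSet, sup_adj, fromEdgeSet_adj, Set.mem_singleton_iff,
    Sym2.eq_iff] at hx
  rcases hx with hadj | ⟨⟨-, rfl⟩ | ⟨-, rfl⟩, hne⟩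
  · exact Or.inr hadj
  · exact Or.inl rfl
  · exact absurd rfl hne

lemma neighborSet_addEdge_of_ne (G : SimpleGraph V) {u v w : V} (hu : w ≠ u) (hv : w ≠ v) :
    (addEdge G u v).neighborSet w = G.neighborSet w := by
  ext x
  simp [addEdge, hu, hv]

theorem ncard_neighborSet_eq_two_of_not_adj [Finite V] {G : SimpleGraph V}
    (hdeg : ∀ v, (G.neighborSet v).ncard ≤ 2)
    (hsat : ∀ u v, u ≠ v → ¬ G.Adj u v → ∃ w, 3 ≤ ((addEdge G u v).neighborSet w).ncard)
    {u v : V} (huv : u ≠ v) (hnadj : ¬ G.Adj u v) :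
    (G.neighborSet u).ncard = 2 ∨ (G.neighborSet v).ncard = 2 := by
  have of_endpoint (a b : V) (h : 3 ≤ ((addEdge G a b).neighborSet a).ncard) :
      (G.neighborSet a).ncard = 2 := by
    have := (Set.ncard_le_ncard (neighborSet_addEdge_subset_insert G a b)).trans
      (Set.ncard_insert_le b _)
    have := hdeg a
    omega
  obtain ⟨w, hw⟩ := hsat u v huv hnadj
  by_cases hwu : w = u
  · subst hwu
    exact .inl (of_endpoint w v hw)
  by_cases hwv : w = v
  · subst hwv
    rw [addEdge_comm] at hw
    exact .inr (of_endpoint w u hw)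
  rw [neighborSet_addEdge_of_ne G hwu hwv] at hw
  have := hdeg w
  omega

lemma ncard_neighborSet_eq_degree (G : SimpleGraph V) (v : V) [Fintype (G.neighborSet v)] :
    (G.neighborSet v).ncard = G.degree v := by
  rw [← coe_neighborFinset, Set.ncard_coe_finset, card_neighborFinset_eq_degree]

variable [Fintype V] (G : SimpleGraph V) [DecidableRel G.Adj]

lemma isClique_setOf_degree_lt_two
    (h : ∀ u v, u ≠ v → ¬ G.Adj u v → G.degree u = 2 ∨ G.degree v = 2) :
    G.IsClique {v | G.degree v < 2} := by
  intro u hu v hv huv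
  by_contra hnadj
  have := h u v huv hnadj
  simp only [Set.mem_ofPred_eq] at hu hv
  omega

lemma sum_two_sub_degree_le_two (hS : G.IsClique {v | G.degree v < 2}) :
    ∑ v, (2 - G.degree v) ≤ 2 := by
  classical
  set S := univ.filter fun v => G.degree v < 2
  have card_le_degree : ∀ v ∈ S, #S - 1 ≤ G.degree v := fun v hv => by
    rw [← card_erase_of_mem hv, ← card_neighborFinset_eq_degree]
    refine card_le_card fun w hw => (mem_neighborFinset ..).2 (hS ?_ ?_ (ne_of_mem_erase hw).symm)
    · simpa [S] using hv
    · simpa [S] using mem_of_mem_erase hw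
  calc ∑ v, (2 - G.degree v) = ∑ v ∈ S, (2 - G.degree v) :=
        (sum_filter_of_ne fun v _ h => by omega).symm
    _ ≤ ∑ v ∈ S, (3 - #S) := sum_le_sum fun v hv => by have := card_le_degree v hv; omega
    _ = #S * (3 - #S) := by rw [sum_const, smul_eq_mul]
    _ ≤ 2 := by
        rcases Nat.lt_or_ge #S 3 with h | h
        · interval_cases #S <;> simp
        · simp [Nat.sub_eq_zero_of_le h]

lemma card_edgeFinset_eq_or_eq_sub_one (hdeg : ∀ v, G.degree v ≤ 2)
    (hdef : ∑ v, (2 - G.degree v) ≤ 2) :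
    #G.edgeFinset = Fintype.card V ∨ #G.edgeFinset = Fintype.card V - 1 := by
  have hsum : ∑ v, (2 - G.degree v) + ∑ v, G.degree v = 2 * Fintype.card V := by
    rw [← sum_add_distrib, sum_congr rfl fun v _ => Nat.sub_add_cancel (hdeg v)]
    simp [mul_comm]
  rw [sum_degrees_eq_twice_card_edges] at hsum
  omega

end SimpleGraph

/-- A `K_{1,3}`-saturated graph on `n` vertices has `n` or `n-1` edges. -/
theorem stmt5 {V : Type*} [Fintype V] (n : ℕ) (hcard : Fintype.card V = n)
    (G : SimpleGraph V)
    (hdeg : ∀ v : V, (G.neighborSet v).ncard ≤ 2)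
    (hsat : ∀ u v : V, u ≠ v → ¬ G.Adj u v →
      ∃ w, 3 ≤ ((addEdge G u v).neighborSet w).ncard) :
    G.edgeSet.ncard = n ∨ G.edgeSet.ncard = n - 1 := by
  classical
  have hpair := fun u v (huv : u ≠ v) hnadj =>
    SimpleGraph.ncard_neighborSet_eq_two_of_not_adj hdeg hsat huv hnadj
  simp only [G.ncard_neighborSet_eq_degree] at hdeg hpair
  rw [← G.coe_edgeFinset, Set.ncard_coe_finset, ← hcard]
  exact G.card_edgeFinset_eq_or_eq_sub_one hdeg
    (G.sum_two_sub_degree_le_two (G.isClique_setOf_degree_lt_two hpair))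
end

section
/- Every spanning subgraph G of K_{n,n} (n ≥ 1) that is C_4-saturated relative to K_{n,n} is connected, and hence has at least 2n − 1 edges. -/
/-- `G` contains a cycle on 4 vertices as a subgraph. -/
def HasC4 {V : Type*} (G : SimpleGraph V) : Prop :=
  ∃ a b c d : V, a ≠ b ∧ a ≠ c ∧ a ≠ d ∧ b ≠ c ∧ b ≠ d ∧ c ≠ d ∧
    G.Adj a b ∧ G.Adj b c ∧ G.Adj c d ∧ G.Adj d a

/-- `G` is a spanning subgraph of `K_{n,n}` that is `C_4`-saturated relative to `K_{n,n}`. -/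
def C4SatBip {n : ℕ} (G : SimpleGraph (Fin n ⊕ Fin n)) : Prop :=
  (∀ x y : Fin n, ¬ G.Adj (.inl x) (.inl y)) ∧
  (∀ x y : Fin n, ¬ G.Adj (.inr x) (.inr y)) ∧
  ¬ HasC4 G ∧
  ∀ (x y : Fin n), ¬ G.Adj (.inl x) (.inr y) → HasC4 (addEdge G (.inl x) (.inr y))

lemma two_new {V : Type*} {u v x1 x2 y1 y2 : V}
    (hX : x1 = u ∧ x2 = v ∨ x1 = v ∧ x2 = u)
    (hY : y1 = u ∧ y2 = v ∨ y1 = v ∧ y2 = u) :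
    (x1 = y1 ∧ x2 = y2) ∨ (x1 = y2 ∧ x2 = y1) := by
  rcases hX with ⟨rfl, rfl⟩ | ⟨rfl, rfl⟩ <;> rcases hY with ⟨rfl, rfl⟩ | ⟨rfl, rfl⟩ <;> simp

lemma reach_aux {V : Type*} {G : SimpleGraph V} {u v : V}
    (h4 : ¬ HasC4 G) (h : HasC4 (addEdge G u v)) : G.Reachable u v := by
  obtain ⟨a, b, c, d, hab, hac, had, hbc, hbd, hcd, e1, e2, e3, e4⟩ := h
  simp only [addEdge, SimpleGraph.sup_adj, SimpleGraph.fromEdgeSet_adj,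
    Set.mem_singleton_iff, Sym2.eq_iff] at e1 e2 e3 e4
  rcases e1 with e1 | ⟨h1, -⟩
  · rcases e2 with e2 | ⟨h2, -⟩
    · rcases e3 with e3 | ⟨h3, -⟩
      · rcases e4 with e4 | ⟨hh4, -⟩
        · exact absurd ⟨a, b, c, d, hab, hac, had, hbc, hbd, hcd, e1, e2, e3, e4⟩ h4
        · have r : G.Reachable a d := e1.reachable.trans (e2.reachable.trans e3.reachable)
          rcases hh4 with ⟨rfl, rfl⟩ | ⟨rfl, rfl⟩
          · exact r.symm
          · exact r
      · rcases e4 with e4 | ⟨hh4, -⟩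
        · have r : G.Reachable d c := e4.reachable.trans (e1.reachable.trans e2.reachable)
          rcases h3 with ⟨rfl, rfl⟩ | ⟨rfl, rfl⟩
          · exact r.symm
          · exact r
        · rcases two_new h3 hh4 with ⟨p, q⟩ | ⟨p, q⟩ <;> simp_all
    · rcases e3 with e3 | ⟨h3, -⟩
      · rcases e4 with e4 | ⟨hh4, -⟩
        · have r : G.Reachable c b := e3.reachable.trans (e4.reachable.trans e1.reachable)
          rcases h2 with ⟨rfl, rfl⟩ | ⟨rfl, rfl⟩
          · exact r.symm
          · exact r
        · rcases two_new h2 hh4 with ⟨p, q⟩ | ⟨p, q⟩ <;> simp_all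
      · rcases two_new h2 h3 with ⟨p, q⟩ | ⟨p, q⟩ <;> simp_all
  · rcases e2 with e2 | ⟨h2, -⟩
    · rcases e3 with e3 | ⟨h3, -⟩
      · rcases e4 with e4 | ⟨hh4, -⟩
        · have r : G.Reachable b a := e2.reachable.trans (e3.reachable.trans e4.reachable)
          rcases h1 with ⟨rfl, rfl⟩ | ⟨rfl, rfl⟩
          · exact r.symm
          · exact r
        · rcases two_new h1 hh4 with ⟨p, q⟩ | ⟨p, q⟩ <;> simp_all
      · rcases two_new h1 h3 with ⟨p, q⟩ | ⟨p, q⟩ <;> simp_all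
    · rcases two_new h1 h2 with ⟨p, q⟩ | ⟨p, q⟩ <;> simp_all

/-- Every `C_4`-saturated spanning subgraph of `K_{n,n}` is connected and hence has at
least `2n - 1` edges. -/
theorem stmt13 (n : ℕ) (hn : 1 ≤ n) (G : SimpleGraph (Fin n ⊕ Fin n))
    (hsat : C4SatBip G) :
    G.Connected ∧ 2 * n - 1 ≤ G.edgeSet.ncard := by
  classical
  obtain ⟨hL, hR, h4, hadd⟩ := hsat
  have z : Fin n := ⟨0, hn⟩
  have reach : ∀ x y : Fin n, G.Reachable (.inl x) (.inr y) := by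
    intro x y
    by_cases h : G.Adj (.inl x) (.inr y)
    · exact h.reachable
    · exact reach_aux h4 (hadd x y h)
  have hconn : G.Connected := by
    rw [SimpleGraph.connected_iff]
    refine ⟨fun a b => ?_, ⟨Sum.inl z⟩⟩
    cases a with
    | inl x => cases b with
      | inl y => exact (reach x z).trans (reach y z).symm
      | inr y => exact reach x y
    | inr x => cases b with
      | inl y => exact (reach y x).symm
      | inr y => exact (reach z x).symm.trans (reach z y)
  refine ⟨hconn, ?_⟩
  have r : Fin n ⊕ Fin n := Sum.inl z
  have key : ∀ v, v ≠ r → ∃ w, G.Adj v w ∧ G.dist w r < G.dist v r := by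
    intro v hv
    obtain ⟨p, hlen⟩ := (hconn v r).exists_walk_length_eq_dist
    cases p with
    | nil => exact absurd rfl hv
    | cons h q =>
      refine ⟨_, h, ?_⟩
      have hq := SimpleGraph.dist_le q
      simp only [SimpleGraph.Walk.length_cons] at hlen
      omega
  choose w hw hlt using key
  have hinj : Function.Injective
      (fun p : {v : Fin n ⊕ Fin n // v ≠ r} =>
        (⟨s(p.1, w p.1 p.2), (SimpleGraph.mem_edgeSet G).mpr (hw p.1 p.2)⟩ : G.edgeSet)) := by
    rintro ⟨a, ha⟩ ⟨b, hb⟩ h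
    simp only [Subtype.mk.injEq, Sym2.eq_iff] at h
    rcases h with ⟨h1, -⟩ | ⟨h1, h2⟩
    · exact Subtype.ext h1
    · exfalso
      have l1 := hlt a ha
      have l2 := hlt b hb
      rw [h2] at l1
      rw [← h1] at l2
      omega
  have h1 : Nat.card {v : Fin n ⊕ Fin n // v ≠ r} ≤ Nat.card G.edgeSet :=
    Nat.card_le_card_of_injective _ hinj
  rw [Nat.card_coe_set_eq] at h1
  have h2 : Nat.card {v : Fin n ⊕ Fin n // v ≠ r} = 2 * n - 1 := by
    rw [Nat.card_eq_fintype_card]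
    have hc := Fintype.card_subtype_compl (p := fun v : Fin n ⊕ Fin n => v = r)
    have he : Fintype.card {v : Fin n ⊕ Fin n // v = r} = 1 := Fintype.card_subtype_eq r
    simp only [Fintype.card_sum, Fintype.card_fin, he] at hc
    have : Fintype.card {v : Fin n ⊕ Fin n // v ≠ r} =
        Fintype.card {v : Fin n ⊕ Fin n // ¬ v = r} := rfl
    rw [this, hc]
    omega
  omega
end

section
/- Let G be a spanning subgraph of K_{n,n} that is C_4-saturated relative to K_{n,n}, with partite sets X and Y, and let S_X ⊆ X, S_Y ⊆ Y be sets with |S_X|, |S_Y| ≥ cn such that every vertex of G has at most d√n neighbors in S_X ∪ S_Y. Then G contains at least c²n² − cdn^{3/2} paths on 4 vertices with one endpoint in S_X and the other in S_Y. -/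
/-! Saturation gives, for every nonadjacent pair `x ∈ S_X`, `y ∈ S_Y`, a path `x a b y`, and
distinct pairs give paths with distinct endpoints. By the degree bound each `x ∈ S_X` misses at
least `|S_Y| - d√n ≥ cn - d√n` vertices of `S_Y`, so there are at least `cn (cn - d√n)` such
paths. -/

/-- Unlike a path on four vertices, this allows `u = v`, i.e. a triangle. -/
def IsP4 {V : Type*} (G : SimpleGraph V) (u a b v : V) : Prop :=
  G.Adj u a ∧ G.Adj a b ∧ G.Adj b v ∧ u ≠ b ∧ v ≠ a

section addEdge

variable {V : Type*} {G : SimpleGraph V} {u v a b c d : V}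

lemma addEdge_adj_iff : (addEdge G u v).Adj a b ↔ G.Adj a b ∨ (s(a, b) = s(u, v) ∧ a ≠ b) := by
  simp only [addEdge, SimpleGraph.sup_adj, SimpleGraph.fromEdgeSet_adj, Set.mem_singleton_iff]

lemma adj_of_addEdge_adj (h : (addEdge G u v).Adj a b) (hbu : b ≠ u) (hbv : b ≠ v) :
    G.Adj a b := by
  refine (addEdge_adj_iff.1 h).resolve_right fun ⟨e, _⟩ => ?_
  rcases Sym2.eq_iff.1 e with ⟨-, rfl⟩ | ⟨-, rfl⟩ <;> contradiction

lemma isP4_of_addEdge_cycle (huc : u ≠ c) (hud : u ≠ d) (hvc : v ≠ c) (hvd : v ≠ d)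
    (h₁ : (addEdge G u v).Adj v c) (h₂ : (addEdge G u v).Adj c d)
    (h₃ : (addEdge G u v).Adj d u) : IsP4 G u d c v :=
  ⟨adj_of_addEdge_adj h₃.symm hud.symm hvd.symm,
    (adj_of_addEdge_adj h₂ hud.symm hvd.symm).symm,
    (adj_of_addEdge_adj h₁ huc.symm hvc.symm).symm, huc, hvd⟩

lemma exists_isP4_of_addEdge_cycle (hac : a ≠ c) (had : a ≠ d) (hbc : b ≠ c) (hbd : b ≠ d)
    (h₁ : (addEdge G u v).Adj b c) (h₂ : (addEdge G u v).Adj c d)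
    (h₃ : (addEdge G u v).Adj d a) (he : s(a, b) = s(u, v)) : ∃ p q, IsP4 G u p q v := by
  rcases Sym2.eq_iff.1 he with ⟨rfl, rfl⟩ | ⟨rfl, rfl⟩
  · exact ⟨d, c, isP4_of_addEdge_cycle hac had hbc hbd h₁ h₂ h₃⟩
  · exact ⟨c, d, isP4_of_addEdge_cycle hbd hbc had hac h₃.symm h₂.symm h₁.symm⟩

/-- A `C_4` created by adding `uv` to a `C_4`-free graph runs through the new edge, so the rest
of it is a path of length three from `u` to `v`. -/
lemma exists_isP4_of_hasC4_addEdge (hG : ¬HasC4 G) (h : HasC4 (addEdge G u v)) :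
    ∃ p q, IsP4 G u p q v := by
  by_contra hno
  obtain ⟨a, b, c, d, hab, hac, had, hbc, hbd, hcd, h₁, h₂, h₃, h₄⟩ := h
  have inG : ∀ {a b c d : V}, a ≠ c → a ≠ d → b ≠ c → b ≠ d →
      (addEdge G u v).Adj a b → (addEdge G u v).Adj b c → (addEdge G u v).Adj c d →
      (addEdge G u v).Adj d a → G.Adj a b :=
    fun hac had hbc hbd h₁ h₂ h₃ h₄ => (addEdge_adj_iff.1 h₁).resolve_right
      fun ⟨e, _⟩ => hno (exists_isP4_of_addEdge_cycle hac had hbc hbd h₂ h₃ h₄ e)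
  exact hG ⟨a, b, c, d, hab, hac, had, hbc, hbd, hcd,
    inG hac had hbc hbd h₁ h₂ h₃ h₄,
    inG hbd hab.symm hcd hac.symm h₂ h₃ h₄ h₁,
    inG hac.symm hbc.symm had.symm hbd.symm h₃ h₄ h₁ h₂,
    inG hbd.symm hcd.symm hab hac h₄ h₁ h₂ h₃⟩

end addEdge

lemma C4SatBip.exists_isP4 {n : ℕ} {G : SimpleGraph (Fin n ⊕ Fin n)} (hG : C4SatBip G)
    {x y : Fin n} (h : ¬G.Adj (.inl x) (.inr y)) : ∃ a b, IsP4 G (.inl x) a b (.inr y) :=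
  exists_isP4_of_hasC4_addEdge hG.2.2.1 (hG.2.2.2 x y h)

lemma Finset.card_mul_sub_le_card_filter_not {α β : Type*} (r : α → β → Prop)
    [∀ a b, Decidable (r a b)] (s : Finset α) (t : Finset β) (D : ℝ)
    (h : ∀ x ∈ s, ((t.filter (r x)).card : ℝ) ≤ D) :
    (s.card : ℝ) * (t.card - D) ≤ ((s ×ˢ t).filter fun p => ¬r p.1 p.2).card := by
  have hsum : ((s ×ˢ t).filter fun p => ¬r p.1 p.2).card =
      ∑ x ∈ s, (t.filter fun y => ¬r x y).card := by
    simp only [Finset.card_filter, Finset.sum_product]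
  have hx : ∀ x ∈ s, (t.card : ℝ) - D ≤ (t.filter fun y => ¬r x y).card := by
    intro x hx
    have := Finset.card_filter_add_card_filter_not (s := t) (r x)
    have := h x hx
    rw [← Nat.cast_inj (R := ℝ), Nat.cast_add] at *
    linarith
  rw [hsum, Nat.cast_sum, ← nsmul_eq_mul]
  exact Finset.card_nsmul_le_sum _ _ _ hx

lemma card_filter_adj_le_ncard_neighborSet_inter {V β : Type*} [Finite V] (G : SimpleGraph V)
    [DecidableRel G.Adj] {g : β → V} (hg : g.Injective) {t : Finset β} {T : Set V}
    (hT : ∀ y ∈ t, g y ∈ T) (v : V) :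
    (t.filter fun y => G.Adj v (g y)).card ≤ (G.neighborSet v ∩ T).ncard := by
  rw [← Set.ncard_coe_finset, ← Set.ncard_image_of_injective _ hg]
  refine Set.ncard_le_ncard ?_ (Set.toFinite _)
  rintro _ ⟨y, hy, rfl⟩
  rw [Finset.coe_filter, Set.mem_ofPred_eq] at hy
  exact ⟨hy.2, hT y hy.1⟩

lemma card_filter_not_adj_le_ncard_isP4 {α β V : Type*} [Finite α] [Finite β] [Finite V]
    (G : SimpleGraph V) [DecidableRel G.Adj] (f : α → V) (g : β → V) (s : Finset α)
    (t : Finset β) (h : ∀ x ∈ s, ∀ y ∈ t, ¬G.Adj (f x) (g y) → ∃ a b, IsP4 G (f x) a b (g y)) :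
    ((s ×ˢ t).filter fun p => ¬G.Adj (f p.1) (g p.2)).card ≤
      {q : α × V × V × β | q.1 ∈ s ∧ q.2.2.2 ∈ t ∧
        IsP4 G (f q.1) q.2.1 q.2.2.1 (g q.2.2.2)}.ncard := by
  rw [← Set.ncard_coe_finset]
  refine (Set.ncard_le_ncard ?_ (Set.toFinite _)).trans
    (Set.ncard_image_le (f := fun q => (q.1, q.2.2.2)) (Set.toFinite _))
  rintro ⟨x, y⟩ hxy
  simp only [Finset.coe_filter, Finset.mem_product, Set.mem_ofPred_eq] at hxy
  obtain ⟨⟨hx, hy⟩, hnadj⟩ := hxy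
  obtain ⟨a, b, hP⟩ := h x hx y hy hnadj
  exact ⟨(x, a, b, y), ⟨hx, hy, hP⟩, rfl⟩

lemma mul_sub_le_max_zero_mul_sub {a A B t : ℝ} (ha : 0 ≤ a) (hA : a ≤ A) (hB : a ≤ B) :
    a * (a - t) ≤ max 0 (A * (B - t)) := by
  rcases le_total t B with htB | hBt
  · refine le_max_of_le_right ?_
    calc a * (a - t) ≤ a * (B - t) := mul_le_mul_of_nonneg_left (sub_le_sub_right hB t) ha
      _ ≤ A * (B - t) := mul_le_mul_of_nonneg_right hA (sub_nonneg.2 htB)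
  · exact le_max_of_le_left (mul_nonpos_of_nonneg_of_nonpos ha (by linarith))

theorem stmt16_general (n : ℕ) (c d : ℝ) (hc : 0 < c)
    (G : SimpleGraph (Fin n ⊕ Fin n)) (hsat : C4SatBip G)
    (SX SY : Finset (Fin n))
    (hSX : c * n ≤ SX.card) (hSY : c * n ≤ SY.card)
    (hdeg : ∀ v : Fin n ⊕ Fin n,
      ((G.neighborSet v ∩ (Sum.inl '' (SX : Set (Fin n)) ∪ Sum.inr '' (SY : Set (Fin n)))).ncard : ℝ)
        ≤ d * Real.sqrt n) :
    c ^ 2 * n ^ 2 - c * d * (n : ℝ) ^ ((3 : ℝ) / 2) ≤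
      ({q : Fin n × (Fin n ⊕ Fin n) × (Fin n ⊕ Fin n) × Fin n |
          q.1 ∈ SX ∧ q.2.2.2 ∈ SY ∧
          G.Adj (.inl q.1) q.2.1 ∧ G.Adj q.2.1 q.2.2.1 ∧ G.Adj q.2.2.1 (.inr q.2.2.2) ∧
          Sum.inl q.1 ≠ q.2.2.1 ∧ Sum.inr q.2.2.2 ≠ q.2.1}.ncard : ℝ) := by
  classical
  have hpow : (n : ℝ) ^ ((3 : ℝ) / 2) = n * √n := by
    rw [show (3 : ℝ) / 2 = 1 + 1 / 2 by norm_num, Real.rpow_add' (Nat.cast_nonneg n) (by norm_num),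
      Real.rpow_one, Real.sqrt_eq_rpow]
  have hnonadj := Finset.card_mul_sub_le_card_filter_not (fun x y => G.Adj (.inl x) (.inr y))
    SX SY (d * √n) fun x _ => (Nat.cast_le.2 (card_filter_adj_le_ncard_neighborSet_inter G
      Sum.inr_injective (fun y hy => Or.inr ⟨y, hy, rfl⟩) (.inl x))).trans (hdeg _)
  have hpaths := card_filter_not_adj_le_ncard_isP4 G Sum.inl Sum.inr SX SY
    fun _ _ _ _ h => hsat.exists_isP4 h
  calc c ^ 2 * n ^ 2 - c * d * (n : ℝ) ^ ((3 : ℝ) / 2) = c * n * (c * n - d * √n) := by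
        rw [hpow]; ring
    _ ≤ max 0 (SX.card * (SY.card - d * √n)) :=
        mul_sub_le_max_zero_mul_sub (by positivity) hSX hSY
    _ ≤ _ := max_le (Nat.cast_nonneg _) hnonadj
    _ ≤ _ := by exact_mod_cast hpaths

/-- In a `C_4`-saturated spanning subgraph of `K_{n,n}` with sets `S_X, S_Y` of size at
least `cn` such that every vertex has at most `d√n` neighbors in `S_X ∪ S_Y`, there are at
least `c²n² - cdn^{3/2}` paths on 4 vertices with one endpoint in `S_X` and the other in
`S_Y`. -/
theorem stmt16 (n : ℕ) (c d : ℝ) (hc : 0 < c) (hd : 0 < d)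
    (G : SimpleGraph (Fin n ⊕ Fin n)) (hsat : C4SatBip G)
    (SX SY : Finset (Fin n))
    (hSX : c * n ≤ SX.card) (hSY : c * n ≤ SY.card)
    (hdeg : ∀ v : Fin n ⊕ Fin n,
      ((G.neighborSet v ∩ (Sum.inl '' (SX : Set (Fin n)) ∪ Sum.inr '' (SY : Set (Fin n)))).ncard : ℝ)
        ≤ d * Real.sqrt n) :
    c ^ 2 * n ^ 2 - c * d * (n : ℝ) ^ ((3 : ℝ) / 2) ≤
      ({q : Fin n × (Fin n ⊕ Fin n) × (Fin n ⊕ Fin n) × Fin n |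
          q.1 ∈ SX ∧ q.2.2.2 ∈ SY ∧
          G.Adj (.inl q.1) q.2.1 ∧ G.Adj q.2.1 q.2.2.1 ∧ G.Adj q.2.2.1 (.inr q.2.2.2) ∧
          Sum.inl q.1 ≠ q.2.2.1 ∧ Sum.inr q.2.2.2 ≠ q.2.1}.ncard : ℝ) :=
  stmt16_general n c d hc G hsat SX SY hSX hSY hdeg
end
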